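/- arXiv:1006.0392 — 5 statements merged into one kernel-verified Lean document; each statement's English description precedes it below -/
import Mathlib

section
/- Let (X, μ) be a probability space and T : X → X a measure-preserving map, and let f ∈ L¹(X, μ). Then for all natural numbers p ≥ 1, n ≥ 1 and 0 ≤ k < p, the Birkhoff averages satisfy ‖A_{np+k} f‖₁ ≤ ‖A_p f‖₁ + ‖f‖₁ / n. -/
open MeasureTheory Finset

/-- The `n`-th Birkhoff average of `f` along `T`: `Aₙ f = (1/n) ∑_{i<n} f ∘ T^i`. -/
noncomputable def birkhoffAvg {X : Type*} (T : X → X) (f : X → ℝ) (n : ℕ) (x : X) : ℝ :=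
  (n : ℝ)⁻¹ * ∑ i ∈ Finset.range n, f (T^[i] x)

theorem birkhoff_average_L1_bound {X : Type*} [MeasurableSpace X]
    (μ : Measure X) [IsProbabilityMeasure μ]
    (T : X → X) (hT : MeasurePreserving T μ μ)
    (f : X → ℝ) (hf : Integrable f μ)
    (p n k : ℕ) (hp : 1 ≤ p) (hn : 1 ≤ n) (hk : k < p) :
    ∫ x, |birkhoffAvg T f (n * p + k) x| ∂μ ≤
      (∫ x, |birkhoffAvg T f p x| ∂μ) + (∫ x, |f x| ∂μ) / n := by
  -- Birkhoff sums
  set S : ℕ → X → ℝ := fun m x => ∑ i ∈ Finset.range m, f (T^[i] x) with hSdef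
  have hcompi : ∀ (m : ℕ) (G : X → ℝ), Integrable G μ →
      Integrable (fun x => G (T^[m] x)) μ := fun m G hG =>
    ((hT.iterate m).integrable_comp hG.aestronglyMeasurable).mpr hG
  have hfi : ∀ m : ℕ, Integrable (fun x => f (T^[m] x)) μ := fun m => hcompi m f hf
  have hSint : ∀ m : ℕ, Integrable (S m) μ := fun m =>
    integrable_finset_sum _ (fun i _ => hfi i)
  -- composing with iterates preserves integrals
  have hcomp : ∀ (m : ℕ) (G : X → ℝ), Integrable G μ →
      ∫ x, G (T^[m] x) ∂μ = ∫ x, G x ∂μ := by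
    intro m G hG
    have hm := (hT.iterate m).map_eq
    calc ∫ x, G (T^[m] x) ∂μ
        = ∫ y, G y ∂(Measure.map (T^[m]) μ) :=
          (integral_map (hT.iterate m).measurable.aemeasurable
            (by rw [hm]; exact hG.aestronglyMeasurable)).symm
      _ = ∫ y, G y ∂μ := by rw [hm]
  -- block decomposition
  have hblock : ∀ x, S (n * p) x = ∑ j ∈ Finset.range n, S p (T^[j * p] x) := by
    intro x
    clear hn
    induction n with
    | zero => simp [hSdef]
    | succ m ih =>
      have : (m + 1) * p = m * p + p := by ring
      rw [this]
      simp only [hSdef] at *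
      rw [Finset.sum_range_add, ih, Finset.sum_range_succ]
      congr 1
      apply Finset.sum_congr rfl
      intro i _
      rw [add_comm (m * p) i, Function.iterate_add_apply]
  have hsplit : ∀ x, S (n * p + k) x
      = ∑ j ∈ Finset.range n, S p (T^[j * p] x) + S k (T^[n * p] x) := by
    intro x
    simp only [hSdef]
    rw [Finset.sum_range_add]
    congr 1
    · exact hblock x
    · apply Finset.sum_congr rfl
      intro i _
      rw [add_comm (n * p) i, Function.iterate_add_apply]
  set N := n * p + k with hN
  have hNpos : 0 < N := by positivity
  -- integral of |S N| bounded
  have hint1 : Integrable (fun x => ∑ j ∈ Finset.range n, |S p (T^[j * p] x)|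
      + |S k (T^[n * p] x)|) μ := by
    apply Integrable.add
    · exact integrable_finset_sum _ (fun j _ =>
        (hcompi (j*p) _ (hSint p)).abs)
    · exact (hcompi (n*p) _ (hSint k)).abs
  have hSN_le : ∫ x, |S N x| ∂μ ≤ (n : ℝ) * ∫ x, |S p x| ∂μ + ∫ x, |S k x| ∂μ := by
    have step1 : ∫ x, |S N x| ∂μ ≤
        ∫ x, (∑ j ∈ Finset.range n, |S p (T^[j * p] x)| + |S k (T^[n * p] x)|) ∂μ := by
      apply integral_mono ((hSint N).abs) hint1
      intro x
      dsimp only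
      rw [hsplit x]
      calc |∑ j ∈ Finset.range n, S p (T^[j * p] x) + S k (T^[n * p] x)|
          ≤ |∑ j ∈ Finset.range n, S p (T^[j * p] x)| + |S k (T^[n * p] x)| := abs_add_le _ _
        _ ≤ ∑ j ∈ Finset.range n, |S p (T^[j * p] x)| + |S k (T^[n * p] x)| := by
            gcongr; exact Finset.abs_sum_le_sum_abs _ _
    have step2 : ∫ x, (∑ j ∈ Finset.range n, |S p (T^[j * p] x)| + |S k (T^[n * p] x)|) ∂μ
        = (n : ℝ) * ∫ x, |S p x| ∂μ + ∫ x, |S k x| ∂μ := by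
      rw [integral_add (integrable_finset_sum _ (fun j _ =>
          (hcompi (j*p) _ (hSint p)).abs))
        ((hcompi (n*p) _ (hSint k)).abs)]
      congr 1
      · rw [integral_finset_sum _ (fun j _ =>
          (hcompi (j*p) _ (hSint p)).abs)]
        rw [Finset.sum_congr rfl (fun j _ => hcomp (j * p) (fun x => |S p x|) (hSint p).abs)]
        simp [Finset.sum_const, nsmul_eq_mul]
      · exact hcomp (n * p) (fun x => |S k x|) (hSint k).abs
    exact step1.trans_eq step2
  have hSk_le : ∫ x, |S k x| ∂μ ≤ (k : ℝ) * ∫ x, |f x| ∂μ := by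
    calc ∫ x, |S k x| ∂μ
        ≤ ∫ x, (∑ i ∈ Finset.range k, |f (T^[i] x)|) ∂μ := by
          apply integral_mono (hSint k).abs
            (integrable_finset_sum _ (fun i _ => (hfi i).abs))
          intro x; exact Finset.abs_sum_le_sum_abs _ _
      _ = ∑ i ∈ Finset.range k, ∫ x, |f (T^[i] x)| ∂μ :=
          integral_finset_sum _ (fun i _ => (hfi i).abs)
      _ = (k : ℝ) * ∫ x, |f x| ∂μ := by
          rw [Finset.sum_congr rfl (fun i _ => hcomp i (fun x => |f x|) hf.abs)]
          simp [Finset.sum_const, nsmul_eq_mul]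
  -- relate averages to sums
  have habs : ∀ (m : ℕ), ∫ x, |birkhoffAvg T f m x| ∂μ = (m : ℝ)⁻¹ * ∫ x, |S m x| ∂μ := by
    intro m
    simp only [birkhoffAvg, abs_mul, abs_inv, Nat.abs_cast]
    rw [integral_const_mul]
  set a := ∫ x, |S p x| ∂μ with ha
  set b := ∫ x, |f x| ∂μ with hb
  have ha0 : 0 ≤ a := integral_nonneg (fun x => abs_nonneg _)
  have hb0 : 0 ≤ b := integral_nonneg (fun x => abs_nonneg _)
  rw [habs N, habs p]
  have key : ∫ x, |S N x| ∂μ ≤ (n : ℝ) * a + (k : ℝ) * b :=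
    hSN_le.trans (by linarith)
  have hNinv : (0:ℝ) < (N : ℝ) := by exact_mod_cast hNpos
  calc (N : ℝ)⁻¹ * ∫ x, |S N x| ∂μ
      ≤ (N : ℝ)⁻¹ * ((n : ℝ) * a + (k : ℝ) * b) := by
        apply mul_le_mul_of_nonneg_left key (by positivity)
    _ ≤ (p : ℝ)⁻¹ * a + b / n := by
        have hp0 : (0:ℝ) < p := by exact_mod_cast hp
        have hn0 : (0:ℝ) < n := by exact_mod_cast hn
        have hd1 : (n:ℝ)/N ≤ 1/p := by
          rw [div_le_div_iff₀ hNinv hp0, one_mul]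
          exact_mod_cast Nat.le_add_right (n*p) k
        have hd2 : (k:ℝ)/N ≤ 1/n := by
          rw [div_le_div_iff₀ hNinv hn0, one_mul]
          have : k * n ≤ N := le_trans (Nat.mul_le_mul_right n (le_of_lt hk))
            (by rw [hN, mul_comm]; exact Nat.le_add_right _ _)
          exact_mod_cast this
        have e1 : (N:ℝ)⁻¹ * ((n:ℝ)*a + (k:ℝ)*b) = ((n:ℝ)/N)*a + ((k:ℝ)/N)*b := by ring
        rw [e1]
        calc ((n:ℝ)/N)*a + ((k:ℝ)/N)*b ≤ (1/(p:ℝ))*a + (1/(n:ℝ))*b := by gcongr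
          _ = (p:ℝ)⁻¹ * a + b / n := by rw [one_div, one_div]; ring
end

section
/- Let (X, μ) be a probability space and T : X → X a measure-preserving map, and let f ∈ L²(X, μ). Then for all natural numbers p ≥ 1, n ≥ 1 and 0 ≤ k < p, the Birkhoff averages satisfy ‖A_{np+k} f‖₂ ≤ ‖A_p f‖₂ + ‖f‖₂ / n. -/
open MeasureTheory Finset

/-!
Write `np + k` as `n` blocks of length `p` followed by a tail of `k ≤ p` terms. Since `T` preserves
`μ`, each block is a translate of `S_p f = p • A_p f` and the tail a translate of `S_k f`, so
`‖S_{np+k} f‖₂ ≤ n p ‖A_p f‖₂ + k ‖f‖₂` by Minkowski. Dividing by `np + k`, and using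
`np ≤ np + k` and `kn ≤ np + k`, gives the bound.
-/

open scoped ENNReal

theorem birkhoffSum_mul {α M : Type*} [AddCommMonoid M] (f : α → α) (g : α → M) (n p : ℕ) :
    birkhoffSum f g (n * p) = birkhoffSum f^[p] (birkhoffSum f g p) n := by
  funext x
  induction n with
  | zero => simp
  | succ n ih =>
    rw [Nat.succ_mul, birkhoffSum_add, ih, birkhoffSum_succ, ← Function.iterate_mul, mul_comm]

theorem birkhoffSum_eq_sum_comp {α M : Type*} [AddCommMonoid M] (f : α → α) (g : α → M) (n : ℕ) :
    birkhoffSum f g n = ∑ i ∈ range n, g ∘ f^[i] := by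
  funext x
  simp [birkhoffSum]

section

variable {α E : Type*} [MeasurableSpace α] {μ : Measure α} [NormedAddCommGroup E]
  {T : α → α} {g : α → E}

theorem MeasureTheory.AEStronglyMeasurable.birkhoffSum (hT : MeasurePreserving T μ μ)
    (hg : AEStronglyMeasurable g μ) (n : ℕ) : AEStronglyMeasurable (birkhoffSum T g n) μ := by
  rw [birkhoffSum_eq_sum_comp]
  exact Finset.aestronglyMeasurable_sum _ fun i _ => hg.comp_measurePreserving (hT.iterate i)

theorem eLpNorm_birkhoffSum_le (hT : MeasurePreserving T μ μ) (hg : AEStronglyMeasurable g μ)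
    {q : ℝ≥0∞} (hq : 1 ≤ q) (n : ℕ) :
    eLpNorm (birkhoffSum T g n) q μ ≤ n * eLpNorm g q μ := by
  calc eLpNorm (birkhoffSum T g n) q μ = eLpNorm (∑ i ∈ range n, g ∘ T^[i]) q μ := by
        rw [birkhoffSum_eq_sum_comp]
    _ ≤ ∑ i ∈ range n, eLpNorm (g ∘ T^[i]) q μ :=
        eLpNorm_sum_le (fun i _ => hg.comp_measurePreserving (hT.iterate i)) hq
    _ = n * eLpNorm g q μ := by
        simp [eLpNorm_comp_measurePreserving hg (hT.iterate _)]

theorem eLpNorm_birkhoffSum_mul_add_le (hT : MeasurePreserving T μ μ)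
    (hg : AEStronglyMeasurable g μ) {q : ℝ≥0∞} (hq : 1 ≤ q) (n p k : ℕ) :
    eLpNorm (birkhoffSum T g (n * p + k)) q μ ≤
      n * eLpNorm (birkhoffSum T g p) q μ + k * eLpNorm g q μ := by
  have hsplit : birkhoffSum T g (n * p + k) =
      birkhoffSum T^[p] (birkhoffSum T g p) n + birkhoffSum T g k ∘ T^[n * p] := by
    funext x
    rw [birkhoffSum_add, birkhoffSum_mul]
    rfl
  have hSk := hg.birkhoffSum hT k
  calc eLpNorm (birkhoffSum T g (n * p + k)) q μ
      ≤ eLpNorm (birkhoffSum T^[p] (birkhoffSum T g p) n) q μ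
        + eLpNorm (birkhoffSum T g k ∘ T^[n * p]) q μ := by
        rw [hsplit]
        exact eLpNorm_add_le ((hg.birkhoffSum hT p).birkhoffSum (hT.iterate p) n)
          (hSk.comp_measurePreserving (hT.iterate _)) hq
    _ ≤ n * eLpNorm (birkhoffSum T g p) q μ + k * eLpNorm g q μ := by
        rw [eLpNorm_comp_measurePreserving hSk (hT.iterate _)]
        exact add_le_add (eLpNorm_birkhoffSum_le (hT.iterate p) (hg.birkhoffSum hT p) hq n)
          (eLpNorm_birkhoffSum_le hT hg hq k)

theorem eLpNorm_birkhoffAverage [NormedSpace ℝ E] (T : α → α) (g : α → E) (q : ℝ≥0∞) (n : ℕ) :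
    eLpNorm (birkhoffAverage ℝ T g n) q μ = eLpNorm (birkhoffSum T g n) q μ / n := by
  rcases eq_or_ne n 0 with rfl | hn
  · simp
  have hsmul : birkhoffAverage ℝ T g n = (n : ℝ)⁻¹ • birkhoffSum T g n := rfl
  rw [hsmul, eLpNorm_const_smul, enorm_inv (by simpa), ENNReal.div_eq_inv_mul]
  simp

end

theorem ENNReal.mul_add_mul_div_le_div_add_div {n p k : ℕ} (hn : n ≠ 0) (hkp : k ≤ p) (a b : ℝ≥0∞) :
    (n * a + k * b) / (n * p + k : ℕ) ≤ a / p + b / n := by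
  rw [ENNReal.add_div]
  refine add_le_add ?_ ?_
  · calc (n * a) / (n * p + k : ℕ) ≤ (n * a) / (n * p) :=
          ENNReal.div_le_div_left (by exact_mod_cast Nat.le_add_right _ _) _
      _ = a / p := ENNReal.mul_div_mul_left _ _ (by simpa) (by simp)
  · rcases Nat.eq_zero_or_pos k with rfl | hk
    · simp
    calc (k * b) / (n * p + k : ℕ) ≤ (k * b) / (k * n) :=
          ENNReal.div_le_div_left (by exact_mod_cast (by nlinarith : k * n ≤ n * p + k)) _
      _ = b / n := ENNReal.mul_div_mul_left _ _ (by simpa using hk.ne') (by simp)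

theorem birkhoff_average_L2_bound_general {X : Type*} [MeasurableSpace X]
    (μ : Measure X)
    (T : X → X) (hT : MeasurePreserving T μ μ)
    (f : X → ℝ) (hf : MemLp f 2 μ)
    (p n k : ℕ) (hn : 1 ≤ n) (hk : k < p) :
    eLpNorm (birkhoffAvg T f (n * p + k)) 2 μ ≤
      eLpNorm (birkhoffAvg T f p) 2 μ + eLpNorm f 2 μ / n := by
  have hAvg : birkhoffAvg T f = birkhoffAverage ℝ T f := rfl
  rw [hAvg, eLpNorm_birkhoffAverage, eLpNorm_birkhoffAverage]
  calc eLpNorm (birkhoffSum T f (n * p + k)) 2 μ / (n * p + k : ℕ)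
      ≤ (n * eLpNorm (birkhoffSum T f p) 2 μ + k * eLpNorm f 2 μ) / (n * p + k : ℕ) := by
        gcongr
        exact eLpNorm_birkhoffSum_mul_add_le hT hf.1 one_le_two n p k
    _ ≤ _ := ENNReal.mul_add_mul_div_le_div_add_div (by omega) hk.le _ _

theorem birkhoff_average_L2_bound {X : Type*} [MeasurableSpace X]
    (μ : Measure X) [IsProbabilityMeasure μ]
    (T : X → X) (hT : MeasurePreserving T μ μ)
    (f : X → ℝ) (hf : MemLp f 2 μ)
    (p n k : ℕ) (hp : 1 ≤ p) (hn : 1 ≤ n) (hk : k < p) :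
    eLpNorm (birkhoffAvg T f (n * p + k)) 2 μ ≤
      eLpNorm (birkhoffAvg T f p) 2 μ + eLpNorm f 2 μ / n :=
  birkhoff_average_L2_bound_general μ T hT f hf p n k hn hk
end

section
/- Let (X, μ) be a probability space, T : X → X a measure-preserving map, f ∈ L¹(X, μ), and ε > 0. If p ≥ 1 is a natural number with ‖A_p f‖₁ ≤ ε/2, then for every natural number m ≥ p · max(1, ⌈2‖f‖₁/ε⌉) one has ‖A_m f‖₁ ≤ ε. (This gives an explicit modulus of L¹-convergence of the Birkhoff averages from the value of a single average.) -/
open MeasureTheory Finset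

/-!
Since `T` preserves `μ`, the sequence `uₙ = ‖Sₙ f‖₁` of `L¹` norms of the Birkhoff sums is
subadditive. Writing `m = q p + r` with `r < p` gives
`‖S_m f‖₁ ≤ q ‖S_p f‖₁ + r ‖f‖₁ ≤ q p ε/2 + p ‖f‖₁`, and the lower bound on `m` makes each of
the two terms at most `m ε / 2`.
-/

theorem Subadditive.apply_le_div_mul_add_mod_mul {u : ℕ → ℝ} (hu : Subadditive u)
    (hu₀ : u 0 ≤ 0) (m p : ℕ) : u m ≤ (m / p : ℕ) * u p + (m % p : ℕ) * u 1 := by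
  have hrem : u (m % p) ≤ (m % p : ℕ) * u 1 := by
    simpa using (hu.apply_mul_add_le (m % p) 1 0).trans (by linarith)
  calc u m = u (m / p * p + m % p) := by rw [Nat.div_add_mod']
    _ ≤ (m / p : ℕ) * u p + u (m % p) := hu.apply_mul_add_le _ _ _
    _ ≤ (m / p : ℕ) * u p + (m % p : ℕ) * u 1 := by gcongr

namespace MeasureTheory.MeasurePreserving

variable {X Y E : Type*} [MeasurableSpace X] [MeasurableSpace Y] [NormedAddCommGroup E]
  {μ : Measure X} {ν : Measure Y} {T : X → X}

theorem integral_comp_of_aestronglyMeasurable [NormedSpace ℝ E] {S : X → Y}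
    (hS : MeasurePreserving S μ ν) {g : Y → E} (hg : AEStronglyMeasurable g ν) :
    ∫ x, g (S x) ∂μ = ∫ y, g y ∂ν := by
  rw [← integral_map hS.measurable.aemeasurable (hS.map_eq ▸ hg), hS.map_eq]

theorem integrable_birkhoffSum (hT : MeasurePreserving T μ μ) {f : X → E}
    (hf : Integrable f μ) (n : ℕ) : Integrable (birkhoffSum T f n) μ :=
  integrable_finsetSum _ fun k _ => (hT.iterate k).integrable_comp_of_integrable hf

theorem subadditive_integral_norm_birkhoffSum (hT : MeasurePreserving T μ μ) {f : X → E}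
    (hf : Integrable f μ) : Subadditive fun n => ∫ x, ‖birkhoffSum T f n x‖ ∂μ := by
  intro m n
  have hSm := (hT.integrable_birkhoffSum hf m).norm
  have hSn : Integrable (fun x => ‖birkhoffSum T f n (T^[m] x)‖) μ :=
    (hT.iterate m).integrable_comp_of_integrable (hT.integrable_birkhoffSum hf n).norm
  calc ∫ x, ‖birkhoffSum T f (m + n) x‖ ∂μ
      ≤ ∫ x, (‖birkhoffSum T f m x‖ + ‖birkhoffSum T f n (T^[m] x)‖) ∂μ :=
        integral_mono (hT.integrable_birkhoffSum hf _).norm (hSm.add hSn) fun x => by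
          simpa only [birkhoffSum_add] using norm_add_le _ _
    _ = ∫ x, ‖birkhoffSum T f m x‖ ∂μ + ∫ x, ‖birkhoffSum T f n x‖ ∂μ := by
        rw [integral_add hSm hSn, (hT.iterate m).integral_comp_of_aestronglyMeasurable
          (hT.integrable_birkhoffSum hf n).norm.aestronglyMeasurable]

end MeasureTheory.MeasurePreserving

theorem integral_abs_birkhoffAvg {X : Type*} [MeasurableSpace X] (μ : Measure X) (T : X → X)
    (f : X → ℝ) (n : ℕ) :
    ∫ x, |birkhoffAvg T f n x| ∂μ = (n : ℝ)⁻¹ * ∫ x, |birkhoffSum T f n x| ∂μ := by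
  simp only [birkhoffAvg, abs_mul, abs_inv, Nat.abs_cast, integral_const_mul]
  rfl

theorem natCast_mul_le_of_mul_max_one_ceil_le {a ε : ℝ} (hε : 0 < ε) {p m : ℕ}
    (hm : p * max 1 ⌈2 * a / ε⌉₊ ≤ m) : (p : ℝ) * a ≤ m * (ε / 2) := by
  have hceil : a ≤ ⌈2 * a / ε⌉₊ * (ε / 2) := by
    have := Nat.le_ceil (2 * a / ε)
    rw [div_le_iff₀ hε] at this
    linarith
  have hm' : (p : ℝ) * ⌈2 * a / ε⌉₊ ≤ m := by
    exact_mod_cast (Nat.mul_le_mul_left p (le_max_right _ _)).trans hm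
  calc (p : ℝ) * a ≤ p * (⌈2 * a / ε⌉₊ * (ε / 2)) := by gcongr
    _ = p * ⌈2 * a / ε⌉₊ * (ε / 2) := by ring
    _ ≤ m * (ε / 2) := by gcongr

theorem birkhoff_average_L1_effective_convergence_general {X : Type*} [MeasurableSpace X]
    (μ : Measure X)
    (T : X → X) (hT : MeasurePreserving T μ μ)
    (f : X → ℝ) (hf : Integrable f μ)
    (ε : ℝ) (hε : 0 < ε)
    (p : ℕ) (hp : 1 ≤ p)
    (hAp : ∫ x, |birkhoffAvg T f p x| ∂μ ≤ ε / 2) :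
    ∀ m : ℕ, p * max 1 ⌈(2 * ∫ x, |f x| ∂μ) / ε⌉₊ ≤ m →
      ∫ x, |birkhoffAvg T f m x| ∂μ ≤ ε := by
  intro m hm
  set u : ℕ → ℝ := fun n => ∫ x, |birkhoffSum T f n x| ∂μ
  have hu : Subadditive u := by
    simpa only [Real.norm_eq_abs] using hT.subadditive_integral_norm_birkhoffSum hf
  have hp₀ : (0 : ℝ) < p := by exact_mod_cast hp
  have hm₀ : (0 : ℝ) < m := by
    exact_mod_cast hp.trans ((Nat.le_mul_of_pos_right p (by positivity)).trans hm)
  have hup : u p ≤ p * (ε / 2) := by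
    rwa [integral_abs_birkhoffAvg, inv_mul_le_iff₀ hp₀] at hAp
  have hu₁ : u 1 = ∫ x, |f x| ∂μ := by simp only [u, birkhoffSum_one]
  have hqp : ((m / p : ℕ) : ℝ) * p ≤ m := by exact_mod_cast Nat.div_mul_le_self m p
  have hrp : ((m % p : ℕ) : ℝ) ≤ p := by exact_mod_cast (Nat.mod_lt m hp).le
  have hpf := natCast_mul_le_of_mul_max_one_ceil_le hε hm
  have hf₀ : 0 ≤ ∫ x, |f x| ∂μ := integral_nonneg fun x => abs_nonneg _
  rw [integral_abs_birkhoffAvg, inv_mul_le_iff₀ hm₀]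
  calc u m ≤ (m / p : ℕ) * u p + (m % p : ℕ) * u 1 :=
        hu.apply_le_div_mul_add_mod_mul (by simp [u]) m p
    _ ≤ (m / p : ℕ) * (p * (ε / 2)) + p * ∫ x, |f x| ∂μ := by rw [hu₁]; gcongr
    _ ≤ m * ε := by nlinarith

/-- Explicit modulus of `L¹` convergence of Birkhoff averages from the value of a single
average: if `‖A_p f‖₁ ≤ ε/2` then `‖A_m f‖₁ ≤ ε` for every `m ≥ p * max 1 ⌈2‖f‖₁/ε⌉`. -/
theorem birkhoff_average_L1_effective_convergence {X : Type*} [MeasurableSpace X]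
    (μ : Measure X) [IsProbabilityMeasure μ]
    (T : X → X) (hT : MeasurePreserving T μ μ)
    (f : X → ℝ) (hf : Integrable f μ)
    (ε : ℝ) (hε : 0 < ε)
    (p : ℕ) (hp : 1 ≤ p)
    (hAp : ∫ x, |birkhoffAvg T f p x| ∂μ ≤ ε / 2) :
    ∀ m : ℕ, p * max 1 ⌈(2 * ∫ x, |f x| ∂μ) / ε⌉₊ ≤ m →
      ∫ x, |birkhoffAvg T f m x| ∂μ ≤ ε :=
  birkhoff_average_L1_effective_convergence_general μ T hT f hf ε hε p hp hAp
end

section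
/- Let (X, μ) be a probability space, T : X → X a measure-preserving map, and f a measurable function with |f| ≤ C μ-almost everywhere. Let ε, δ > 0, let p ≥ 1 be a natural number with ‖A_p f‖₁ ≤ δε/2, and let n₀ ≥ 1 be a natural number with n₀ ≥ 4(p−1)C/δ. Then μ({x : ∃ n ≥ n₀, |Aₙ f(x)| > δ}) ≤ ε. -/
/-!
Write `g = A_p f`. Along an orbit on which `|f| ≤ C`, the Birkhoff sum `Sₙ g` is the average of
the shifted sums `Sₙ f ∘ T^j` over `j < p`, and shifting by `j` changes `Sₙ f` by at most `2jC`;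
so `|Aₙ g - Aₙ f| ≤ 2(p-1)C/n ≤ δ/2` once `n ≥ n₀`, and `|Aₙ f| > δ` forces `|Aₙ g| > δ/2`.
The maximal ergodic inequality `(δ/2) μ{∃ n, |Aₙ g| > δ/2} ≤ ‖g‖₁ ≤ δε/2` then concludes.

The maximal inequality comes from Garsia's argument: the running maximum
`M_N = max_{k ≤ N} S_k h` satisfies `M_N ≤ h + M_N ∘ T` wherever `M_N > 0`, and integrating
this over `{M_N > 0}` against the invariant measure gives `∫_{M_N > 0} h ≥ 0`.
-/

open MeasureTheory Finset

theorem birkhoffAvg_eq_birkhoffAverage {X : Type*} (T : X → X) (f : X → ℝ) :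
    birkhoffAvg T f = birkhoffAverage ℝ T f :=
  rfl

section Orbit

variable {X : Type*} (T : X → X)

theorem abs_birkhoffSum_le {f : X → ℝ} {C : ℝ} {x : X} (hC : ∀ i, |f (T^[i] x)| ≤ C) (n : ℕ) :
    |birkhoffSum T f n x| ≤ n * C :=
  calc |birkhoffSum T f n x| ≤ ∑ i ∈ range n, |f (T^[i] x)| := abs_sum_le_sum_abs _ _
    _ ≤ n * C := by simpa using sum_le_card_nsmul (range n) _ C fun i _ => hC i

theorem abs_birkhoffSum_iterate_sub_le {f : X → ℝ} {C : ℝ} {x : X}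
    (hC : ∀ i, |f (T^[i] x)| ≤ C) (n j : ℕ) :
    |birkhoffSum T f n (T^[j] x) - birkhoffSum T f n x| ≤ 2 * j * C := by
  have hshift : birkhoffSum T f n (T^[j] x) - birkhoffSum T f n x
      = birkhoffSum T f j (T^[n] x) - birkhoffSum T f j x := by
    have h₁ := birkhoffSum_add T f j n x
    have h₂ := birkhoffSum_add T f n j x
    rw [add_comm n j] at h₂
    linarith
  have hCn : ∀ i, |f (T^[i] (T^[n] x))| ≤ C := fun i => by
    rw [← Function.iterate_add_apply]; exact hC _
  rw [hshift]
  calc _ ≤ |birkhoffSum T f j (T^[n] x)| + |birkhoffSum T f j x| := abs_sub _ _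
    _ ≤ j * C + j * C := add_le_add (abs_birkhoffSum_le T hCn j) (abs_birkhoffSum_le T hC j)
    _ = 2 * j * C := by ring

theorem birkhoffSum_birkhoffAverage_comm (f : X → ℝ) (n p : ℕ) :
    birkhoffSum T (birkhoffAverage ℝ T f p) n = birkhoffAverage ℝ T (birkhoffSum T f n) p := by
  funext x
  simp only [birkhoffAverage, birkhoffSum, smul_eq_mul, ← mul_sum]
  rw [sum_comm]
  simp only [← Function.iterate_add_apply, add_comm]

theorem abs_birkhoffAverage_sub_le {φ : X → ℝ} {x : X} {p : ℕ} (hp : 0 < p) {K : ℝ}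
    (hK : ∀ j < p, |φ (T^[j] x) - φ x| ≤ K) : |birkhoffAverage ℝ T φ p x - φ x| ≤ K := by
  have hp' : (0 : ℝ) < p := by exact_mod_cast hp
  have hsub :
      birkhoffAverage ℝ T φ p x - φ x = (p : ℝ)⁻¹ * ∑ j ∈ range p, (φ (T^[j] x) - φ x) := by
    simp only [birkhoffAverage, birkhoffSum, smul_eq_mul, sum_sub_distrib, sum_const, card_range,
      nsmul_eq_mul]
    field_simp
  rw [hsub, abs_mul, abs_inv, Nat.abs_cast, inv_mul_le_iff₀ hp']
  calc |∑ j ∈ range p, (φ (T^[j] x) - φ x)| ≤ ∑ j ∈ range p, |φ (T^[j] x) - φ x| :=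
        abs_sum_le_sum_abs _ _
    _ ≤ p * K := by simpa using sum_le_card_nsmul (range p) _ K fun j hj => hK j (mem_range.1 hj)

theorem abs_birkhoffAverage_birkhoffAverage_sub_le {f : X → ℝ} {C : ℝ} {x : X}
    (hC : ∀ i, |f (T^[i] x)| ≤ C) {p : ℕ} (hp : 0 < p) (n : ℕ) :
    |birkhoffAverage ℝ T f n x - birkhoffAverage ℝ T (birkhoffAverage ℝ T f p) n x|
      ≤ 2 * (p - 1) * C / n := by
  have hC₀ : 0 ≤ C := (abs_nonneg _).trans (hC 0)
  have hshift : ∀ j < p, |birkhoffSum T f n (T^[j] x) - birkhoffSum T f n x| ≤ 2 * (p - 1) * C :=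
    fun j hj => (abs_birkhoffSum_iterate_sub_le T hC n j).trans <| by
      have : (j : ℝ) ≤ p - 1 := by
        rw [le_sub_iff_add_le]; exact_mod_cast hj
      gcongr
  calc |birkhoffAverage ℝ T f n x - birkhoffAverage ℝ T (birkhoffAverage ℝ T f p) n x|
      = (n : ℝ)⁻¹ * |birkhoffAverage ℝ T (birkhoffSum T f n) p x - birkhoffSum T f n x| := by
        rw [abs_sub_comm, ← birkhoffSum_birkhoffAverage_comm, birkhoffAverage, birkhoffAverage,
          smul_eq_mul, smul_eq_mul, ← mul_sub, abs_mul, abs_inv, Nat.abs_cast]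
    _ ≤ (n : ℝ)⁻¹ * (2 * (p - 1) * C) := by
        gcongr; exact abs_birkhoffAverage_sub_le T hp hshift
    _ = 2 * (p - 1) * C / n := inv_mul_eq_div _ _

theorem half_lt_abs_birkhoffAverage_birkhoffAverage {f : X → ℝ} {C δ : ℝ} {x : X}
    (hC : ∀ i, |f (T^[i] x)| ≤ C) {p n : ℕ} (hp : 0 < p) (hn : 4 * ((p : ℝ) - 1) * C ≤ n * δ)
    (hδ : δ < |birkhoffAverage ℝ T f n x|) :
    δ / 2 < |birkhoffAverage ℝ T (birkhoffAverage ℝ T f p) n x| := by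
  rcases n.eq_zero_or_pos with rfl | hn₀
  · simp only [birkhoffAverage_zero', Pi.zero_apply, abs_zero] at hδ ⊢
    linarith
  have hclose : |birkhoffAverage ℝ T f n x - birkhoffAverage ℝ T (birkhoffAverage ℝ T f p) n x|
      ≤ δ / 2 :=
    (abs_birkhoffAverage_birkhoffAverage_sub_le T hC hp n).trans <|
      (div_le_iff₀ (by exact_mod_cast hn₀)).2 (by linarith)
  linarith [abs_sub_abs_le_abs_sub (birkhoffAverage ℝ T f n x)
    (birkhoffAverage ℝ T (birkhoffAverage ℝ T f p) n x)]

end Orbit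

section RunningMax

variable {X : Type*} {T : X → X} {h : X → ℝ}

noncomputable def maxBirkhoffSum (T : X → X) (h : X → ℝ) : ℕ → X → ℝ
  | 0 => 0
  | N + 1 => maxBirkhoffSum T h N ⊔ birkhoffSum T h (N + 1)

theorem maxBirkhoffSum_le_iff {N : ℕ} {x : X} {a : ℝ} :
    maxBirkhoffSum T h N x ≤ a ↔ ∀ k ≤ N, birkhoffSum T h k x ≤ a := by
  induction N with
  | zero => simp [maxBirkhoffSum]
  | succ N ih =>
    simp only [maxBirkhoffSum, Pi.sup_apply, sup_le_iff, ih, Nat.le_succ_iff, or_imp, forall_and,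
      forall_eq]

theorem birkhoffSum_le_maxBirkhoffSum {k N : ℕ} (hk : k ≤ N) (x : X) :
    birkhoffSum T h k x ≤ maxBirkhoffSum T h N x :=
  maxBirkhoffSum_le_iff.1 le_rfl k hk

theorem maxBirkhoffSum_nonneg (N : ℕ) (x : X) : 0 ≤ maxBirkhoffSum T h N x := by
  simpa using birkhoffSum_le_maxBirkhoffSum (T := T) (h := h) N.zero_le x

theorem maxBirkhoffSum_mono {M N : ℕ} (hMN : M ≤ N) (x : X) :
    maxBirkhoffSum T h M x ≤ maxBirkhoffSum T h N x :=
  maxBirkhoffSum_le_iff.2 fun _ hk => birkhoffSum_le_maxBirkhoffSum (hk.trans hMN) x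

theorem maxBirkhoffSum_pos_iff {N : ℕ} {x : X} :
    0 < maxBirkhoffSum T h N x ↔ ∃ k ≤ N, 0 < birkhoffSum T h k x := by
  simpa using (maxBirkhoffSum_le_iff (T := T) (h := h) (N := N) (x := x) (a := 0)).not

theorem maxBirkhoffSum_le_max_zero_add (N : ℕ) (x : X) :
    maxBirkhoffSum T h N x ≤ max 0 (h x + maxBirkhoffSum T h N (T x)) := by
  refine maxBirkhoffSum_le_iff.2 fun k hk => ?_
  rcases k with _ | k
  · simp
  · rw [birkhoffSum_succ']
    exact le_max_of_le_right <| add_le_add le_rfl <| birkhoffSum_le_maxBirkhoffSum (by omega) _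

theorem lt_birkhoffAverage_iff_birkhoffSum_sub_pos {t : ℝ} (ht : 0 ≤ t) (n : ℕ) (x : X) :
    t < birkhoffAverage ℝ T h n x ↔ 0 < birkhoffSum T (fun y => h y - t) n x := by
  have hsum : birkhoffSum T (fun y => h y - t) n x = birkhoffSum T h n x - n * t := by
    simp [birkhoffSum, sum_sub_distrib]
  rcases n.eq_zero_or_pos with rfl | hn
  · simp [ht.not_gt]
  · rw [hsum, sub_pos, birkhoffAverage, smul_eq_mul, lt_inv_mul_iff₀ (by exact_mod_cast hn)]

end RunningMax

section Maximal

variable {X : Type*} [MeasurableSpace X] {μ : Measure X} {T : X → X} {h : X → ℝ}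

theorem MeasureTheory.MeasurePreserving.ae_forall_iterate (hT : MeasurePreserving T μ μ)
    {P : X → Prop} (hP : ∀ᵐ x ∂μ, P x) : ∀ᵐ x ∂μ, ∀ i, P (T^[i] x) :=
  ae_all_iff.2 fun i => (hT.iterate i).quasiMeasurePreserving.ae hP

theorem measurable_birkhoffSum (hT : Measurable T) (hh : Measurable h) (n : ℕ) :
    Measurable (birkhoffSum T h n) :=
  Finset.measurable_sum _ fun i _ => hh.comp (hT.iterate i)

theorem integrable_birkhoffSum (hT : MeasurePreserving T μ μ) (hh : Integrable h μ) (n : ℕ) :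
    Integrable (birkhoffSum T h n) μ :=
  integrable_finsetSum _ fun i _ => (hT.iterate i).integrable_comp_of_integrable hh

theorem measurable_maxBirkhoffSum (hT : Measurable T) (hh : Measurable h) (N : ℕ) :
    Measurable (maxBirkhoffSum T h N) := by
  induction N with
  | zero => exact measurable_const
  | succ N ih => exact ih.sup (measurable_birkhoffSum hT hh (N + 1))

theorem integrable_maxBirkhoffSum (hT : MeasurePreserving T μ μ) (hh : Integrable h μ) (N : ℕ) :
    Integrable (maxBirkhoffSum T h N) μ := by
  induction N with
  | zero => exact integrable_zero X ℝ μ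
  | succ N ih => exact ih.sup (integrable_birkhoffSum hT hh (N + 1))

theorem setIntegral_maxBirkhoffSum_pos_nonneg (hT : MeasurePreserving T μ μ) (hhm : Measurable h)
    (hh : Integrable h μ) (N : ℕ) :
    0 ≤ ∫ x in {x | 0 < maxBirkhoffSum T h N x}, h x ∂μ := by
  set M := maxBirkhoffSum T h N
  set E := {x | 0 < M x}
  have hMm : Measurable M := measurable_maxBirkhoffSum hT.measurable hhm N
  have hE : MeasurableSet E := measurableSet_lt measurable_const hMm
  have hMi : Integrable M μ := integrable_maxBirkhoffSum hT hh N
  have hMTi : Integrable (fun x => M (T x)) μ := hT.integrable_comp_of_integrable hMi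
  have hstep : ∀ x ∈ E, M x - M (T x) ≤ h x := fun x hx => by
    have := maxBirkhoffSum_le_max_zero_add (T := T) (h := h) N x
    rcases le_max_iff.1 this with h0 | h1
    · exact absurd hx h0.not_gt
    · linarith
  have hinvariant : ∫ x, M (T x) ∂μ = ∫ x, M x ∂μ := by
    rw [← integral_map hT.measurable.aemeasurable (hT.map_eq ▸ hMm.aestronglyMeasurable),
      hT.map_eq]
  calc 0 = ∫ x, M x ∂μ - ∫ x, M (T x) ∂μ := by rw [hinvariant, sub_self]
    _ ≤ ∫ x in E, M x ∂μ - ∫ x in E, M (T x) ∂μ := by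
        refine sub_le_sub (setIntegral_eq_integral_of_forall_compl_eq_zero fun x hx =>
          le_antisymm (not_lt.1 hx) (maxBirkhoffSum_nonneg N x)).ge ?_
        exact setIntegral_le_integral hMTi (.of_forall fun x => maxBirkhoffSum_nonneg N (T x))
    _ = ∫ x in E, (M x - M (T x)) ∂μ := (integral_sub hMi.integrableOn hMTi.integrableOn).symm
    _ ≤ ∫ x in E, h x ∂μ := setIntegral_mono_on (hMi.sub hMTi).integrableOn hh.integrableOn hE hstep

theorem setIntegral_birkhoffSum_pos_nonneg (hT : MeasurePreserving T μ μ) (hhm : Measurable h)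
    (hh : Integrable h μ) :
    0 ≤ ∫ x in {x | ∃ n, 0 < birkhoffSum T h n x}, h x ∂μ := by
  have hE : ∀ N, MeasurableSet {x | 0 < maxBirkhoffSum T h N x} := fun N =>
    measurableSet_lt measurable_const (measurable_maxBirkhoffSum hT.measurable hhm N)
  have hmono : Monotone fun N => {x | 0 < maxBirkhoffSum T h N x} := fun M N hMN x hx =>
    lt_of_lt_of_le hx (maxBirkhoffSum_mono hMN x)
  have hunion : ⋃ N, {x | 0 < maxBirkhoffSum T h N x} = {x | ∃ n, 0 < birkhoffSum T h n x} := by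
    ext x
    simp only [Set.mem_iUnion, Set.mem_ofPred_eq, maxBirkhoffSum_pos_iff]
    exact ⟨fun ⟨_, k, _, hk⟩ => ⟨k, hk⟩, fun ⟨k, hk⟩ => ⟨k, k, le_rfl, hk⟩⟩
  have hlim := tendsto_setIntegral_of_monotone hE hmono hh.integrableOn
  rw [hunion] at hlim
  exact ge_of_tendsto' hlim fun N => setIntegral_maxBirkhoffSum_pos_nonneg hT hhm hh N

theorem mul_measureReal_birkhoffAverage_gt_le [IsFiniteMeasure μ] (hT : MeasurePreserving T μ μ)
    (hhm : Measurable h) (hh : Integrable h μ) {t : ℝ} (ht : 0 ≤ t) :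
    t * μ.real {x | ∃ n, t < birkhoffAverage ℝ T h n x}
      ≤ ∫ x in {x | ∃ n, t < birkhoffAverage ℝ T h n x}, h x ∂μ := by
  have hset : {x | ∃ n, t < birkhoffAverage ℝ T h n x}
      = {x | ∃ n, 0 < birkhoffSum T (fun y => h y - t) n x} := by
    simp only [lt_birkhoffAverage_iff_birkhoffSum_sub_pos ht]
  have := setIntegral_birkhoffSum_pos_nonneg (h := fun y => h y - t) hT
    (hhm.sub measurable_const) (hh.sub (integrable_const t))
  rw [← hset, integral_sub hh.integrableOn (integrable_const t).integrableOn, setIntegral_const,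
    smul_eq_mul] at this
  linarith

theorem measurable_birkhoffAverage (hT : Measurable T) (hh : Measurable h) (n : ℕ) :
    Measurable (birkhoffAverage ℝ T h n) :=
  (measurable_birkhoffSum hT hh n).const_smul (n : ℝ)⁻¹

theorem integrable_birkhoffAverage (hT : MeasurePreserving T μ μ) (hh : Integrable h μ) (n : ℕ) :
    Integrable (birkhoffAverage ℝ T h n) μ :=
  (integrable_birkhoffSum hT hh n).smul (n : ℝ)⁻¹

theorem measurableSet_exists_lt_birkhoffAverage (hT : Measurable T) (hhm : Measurable h) (t : ℝ) :
    MeasurableSet {x | ∃ n, t < birkhoffAverage ℝ T h n x} := by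
  simp only [Set.ofPred_exists]
  exact .iUnion fun n => measurableSet_lt measurable_const (measurable_birkhoffAverage hT hhm n)

theorem setIntegral_le_integral_max_zero {s : Set X} (hs : MeasurableSet s)
    (hh : Integrable h μ) : ∫ x in s, h x ∂μ ≤ ∫ x, max (h x) 0 ∂μ :=
  (setIntegral_mono_on hh.integrableOn hh.pos_part.integrableOn hs fun _ _ =>
    le_max_left _ _).trans
    (setIntegral_le_integral hh.pos_part (.of_forall fun _ => le_max_right _ _))

theorem mul_measureReal_abs_birkhoffAverage_gt_le [IsFiniteMeasure μ]
    (hT : MeasurePreserving T μ μ) (hhm : Measurable h) (hh : Integrable h μ) {t : ℝ}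
    (ht : 0 ≤ t) : t * μ.real {x | ∃ n, t < |birkhoffAverage ℝ T h n x|} ≤ ∫ x, |h x| ∂μ := by
  set E := {x | ∃ n, t < birkhoffAverage ℝ T h n x}
  set E' := {x | ∃ n, t < birkhoffAverage ℝ T (-h) n x}
  have hsub : {x | ∃ n, t < |birkhoffAverage ℝ T h n x|} ⊆ E ∪ E' := by
    rintro x ⟨n, hn⟩
    rcases lt_abs.1 hn with hpos | hneg
    · exact .inl ⟨n, hpos⟩
    · exact .inr ⟨n, by rwa [birkhoffAverage_neg]⟩
  calc t * μ.real {x | ∃ n, t < |birkhoffAverage ℝ T h n x|}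
      ≤ t * μ.real E + t * μ.real E' := by
        rw [← mul_add]; gcongr; exact (measureReal_mono hsub).trans (measureReal_union_le _ _)
    _ ≤ ∫ x in E, h x ∂μ + ∫ x in E', (-h) x ∂μ :=
        add_le_add (mul_measureReal_birkhoffAverage_gt_le hT hhm hh ht)
          (mul_measureReal_birkhoffAverage_gt_le hT hhm.neg hh.neg ht)
    _ ≤ ∫ x, max (h x) 0 ∂μ + ∫ x, max (-h x) 0 ∂μ :=
        add_le_add
          (setIntegral_le_integral_max_zero
            (measurableSet_exists_lt_birkhoffAverage hT.measurable hhm t) hh)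
          (setIntegral_le_integral_max_zero
            (measurableSet_exists_lt_birkhoffAverage hT.measurable hhm.neg t) hh.neg)
    _ = ∫ x, (max (h x) 0 + max (-h x) 0) ∂μ := (integral_add hh.pos_part hh.neg.pos_part).symm
    _ = ∫ x, |h x| ∂μ := by simp only [max_zero_add_max_neg_zero_eq_abs_self]

end Maximal

theorem birkhoff_effective_as_convergence_bounded_general {X : Type*} [MeasurableSpace X]
    (μ : Measure X) [IsProbabilityMeasure μ]
    (T : X → X) (hT : MeasurePreserving T μ μ)
    (f : X → ℝ) (hfm : Measurable f) (C : ℝ) (hfC : ∀ᵐ x ∂μ, |f x| ≤ C)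
    (ε δ : ℝ) (hδ : 0 < δ)
    (p : ℕ) (hp : 1 ≤ p) (hAp : ∫ x, |birkhoffAvg T f p x| ∂μ ≤ δ * ε / 2)
    (n₀ : ℕ) (hn₀C : 4 * ((p : ℝ) - 1) * C / δ ≤ (n₀ : ℝ)) :
    μ {x | ∃ n, n₀ ≤ n ∧ δ < |birkhoffAvg T f n x|} ≤ ENNReal.ofReal ε := by
  simp only [birkhoffAvg_eq_birkhoffAverage] at hAp ⊢
  have hf : Integrable f μ := .of_bound hfm.aestronglyMeasurable C (by simpa using hfC)
  set g := birkhoffAverage ℝ T f p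
  have hmaximal : δ / 2 * μ.real {x | ∃ n, δ / 2 < |birkhoffAverage ℝ T g n x|}
      ≤ ∫ x, |g x| ∂μ :=
    mul_measureReal_abs_birkhoffAverage_gt_le hT (measurable_birkhoffAverage hT.measurable hfm p)
      (integrable_birkhoffAverage hT hf p) (half_pos hδ).le
  have hsub : {x | ∃ n, n₀ ≤ n ∧ δ < |birkhoffAverage ℝ T f n x|}
      ≤ᵐ[μ] {x | ∃ n, δ / 2 < |birkhoffAverage ℝ T g n x|} := by
    filter_upwards [hT.ae_forall_iterate hfC] with x hx ⟨n, hn, hδn⟩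
    exact ⟨n, half_lt_abs_birkhoffAverage_birkhoffAverage T hx hp
      ((div_le_iff₀ hδ).1 hn₀C |>.trans (by gcongr)) hδn⟩
  calc μ {x | ∃ n, n₀ ≤ n ∧ δ < |birkhoffAverage ℝ T f n x|}
      ≤ μ {x | ∃ n, δ / 2 < |birkhoffAverage ℝ T g n x|} := measure_mono_ae hsub
    _ = ENNReal.ofReal (μ.real {x | ∃ n, δ / 2 < |birkhoffAverage ℝ T g n x|}) :=
        (ofReal_measureReal (measure_ne_top μ _)).symm
    _ ≤ ENNReal.ofReal ε := ENNReal.ofReal_le_ofReal <|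
        le_of_mul_le_mul_left (hmaximal.trans (hAp.trans_eq (by ring))) (half_pos hδ)

/-- Effective a.s. convergence for bounded observables: if `‖A_p f‖₁ ≤ δε/2` and
`n₀ ≥ 4(p-1)C/δ`, then `μ{x : ∃ n ≥ n₀, |Aₙ f x| > δ} ≤ ε`. -/
theorem birkhoff_effective_as_convergence_bounded {X : Type*} [MeasurableSpace X]
    (μ : Measure X) [IsProbabilityMeasure μ]
    (T : X → X) (hT : MeasurePreserving T μ μ)
    (f : X → ℝ) (hfm : Measurable f) (C : ℝ) (hfC : ∀ᵐ x ∂μ, |f x| ≤ C)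
    (ε δ : ℝ) (hε : 0 < ε) (hδ : 0 < δ)
    (p : ℕ) (hp : 1 ≤ p) (hAp : ∫ x, |birkhoffAvg T f p x| ∂μ ≤ δ * ε / 2)
    (n₀ : ℕ) (hn₀ : 1 ≤ n₀) (hn₀C : 4 * ((p : ℝ) - 1) * C / δ ≤ (n₀ : ℝ)) :
    μ {x | ∃ n, n₀ ≤ n ∧ δ < |birkhoffAvg T f n x|} ≤ ENNReal.ofReal ε :=
  birkhoff_effective_as_convergence_bounded_general μ T hT f hfm C hfC ε δ hδ p hp hAp n₀ hn₀C
end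

section
/- Let X be a topological space and μ a Borel probability measure on X. Let (U_{i,n})_{i,n ∈ ℕ} be a doubly-indexed family of open subsets of X such that for every i, Σₙ μ(X \ U_{i,n}) < ∞. Then there exists a sequence (Vₙ) of open subsets of X with Σₙ μ(X \ Vₙ) < ∞ and such that the Borel–Cantelli set ⋃_k ⋂_{n ≥ k} Vₙ is contained in ⋂_i ⋃_k ⋂_{n ≥ k} U_{i,n}. (The intersection of a family of Borel–Cantelli sets contains a Borel–Cantelli set.) -/
open MeasureTheory Set
open scoped ENNReal

/-- The intersection of a uniform family of Borel–Cantelli sets contains a Borel–Cantelli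
set: given open sets `U i n` with `∑ₙ μ (U i n)ᶜ < ∞` for each `i`, there are open sets
`Vₙ` with `∑ₙ μ (Vₙ)ᶜ < ∞` whose Borel–Cantelli set is contained in all of the
Borel–Cantelli sets of the families `(U i ·)`. -/
theorem intersection_borelCantelli_contains_borelCantelli
    {X : Type*} [TopologicalSpace X] [MeasurableSpace X] [BorelSpace X]
    (μ : Measure X) [IsProbabilityMeasure μ]
    (U : ℕ → ℕ → Set X) (hUopen : ∀ i n, IsOpen (U i n))
    (hsum : ∀ i, ∑' n, μ (U i n)ᶜ ≠ ⊤) :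
    ∃ V : ℕ → Set X, (∀ n, IsOpen (V n)) ∧ (∑' n, μ (V n)ᶜ ≠ ⊤) ∧
      (⋃ k, ⋂ n, ⋂ _ : k ≤ n, V n) ⊆ ⋂ i, ⋃ k, ⋂ n, ⋂ _ : k ≤ n, U i n := by
  have hN : ∀ i : ℕ, ∃ N : ℕ, ∑' n, μ (U i (n + N))ᶜ ≤ 2⁻¹ ^ i := by
    intro i
    have h0 : (0 : ℝ≥0∞) < 2⁻¹ ^ i := ENNReal.pow_pos (ENNReal.inv_pos.mpr (by norm_num)) i
    have := (ENNReal.tendsto_sum_nat_add (fun n => μ (U i n)ᶜ) (hsum i)).eventually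
      (gt_mem_nhds h0)
    rcases this.exists with ⟨N, hNlt⟩
    exact ⟨N, hNlt.le⟩
  choose N hNle using hN
  set V : ℕ → Set X := fun n => ⋂ i ∈ Finset.range (n + 1), U i (n + N i) with hV
  refine ⟨V, ?_, ?_, ?_⟩
  · intro n
    exact isOpen_biInter_finset fun i _ => hUopen i (n + N i)
  · -- sum bound
    have hle : ∀ n, μ (V n)ᶜ ≤ ∑' i, if i ≤ n then μ (U i (n + N i))ᶜ else 0 := by
      intro n
      have : (V n)ᶜ = ⋃ i ∈ Finset.range (n + 1), (U i (n + N i))ᶜ := by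
        simp [hV, compl_iInter]
      rw [this]
      refine le_trans (measure_biUnion_finset_le _ _) ?_
      calc ∑ i ∈ Finset.range (n+1), μ (U i (n + N i))ᶜ
          = ∑ i ∈ Finset.range (n+1), if i ≤ n then μ (U i (n + N i))ᶜ else 0 := by
            apply Finset.sum_congr rfl
            intro i hi
            rw [if_pos (Nat.lt_succ_iff.mp (Finset.mem_range.mp hi))]
        _ ≤ ∑' i, if i ≤ n then μ (U i (n + N i))ᶜ else 0 :=
            ENNReal.sum_le_tsum _
    have hmain : ∑' n, μ (V n)ᶜ ≤ ∑' (i : ℕ), (2⁻¹ : ℝ≥0∞) ^ i := by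
      calc ∑' n, μ (V n)ᶜ
          ≤ ∑' n, ∑' i, if i ≤ n then μ (U i (n + N i))ᶜ else 0 :=
            ENNReal.tsum_le_tsum hle
        _ = ∑' i, ∑' n, if i ≤ n then μ (U i (n + N i))ᶜ else 0 := ENNReal.tsum_comm
        _ ≤ ∑' (i : ℕ), (2⁻¹ : ℝ≥0∞) ^ i := by
            refine ENNReal.tsum_le_tsum fun i => ?_
            refine le_trans ?_ (hNle i)
            calc ∑' n, (if i ≤ n then μ (U i (n + N i))ᶜ else 0)
                ≤ ∑' n, μ (U i (n + N i))ᶜ := by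
                  refine ENNReal.tsum_le_tsum fun n => ?_
                  split <;> simp
              _ = ∑' n, μ (U i (n + N i))ᶜ := rfl
    refine ne_top_of_le_ne_top ?_ hmain
    simp [ENNReal.tsum_geometric, ENNReal.sub_ne_top]
  · intro x hx
    rcases mem_iUnion.mp hx with ⟨k, hk⟩
    simp only [mem_iInter] at hk ⊢
    intro i
    refine mem_iUnion.mpr ⟨max k i + N i, ?_⟩
    simp only [mem_iInter]
    intro m hm
    have h1 : max k i ≤ m - N i := Nat.le_sub_of_add_le hm
    have h2 : m - N i + N i = m := Nat.sub_add_cancel (le_trans (Nat.le_add_left _ _) hm)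
    have hx2 : x ∈ V (m - N i) := hk (m - N i) (le_trans (le_max_left _ _) h1)
    have : x ∈ U i (m - N i + N i) := by
      have hi : i ∈ Finset.range (m - N i + 1) :=
        Finset.mem_range.mpr (Nat.lt_succ_of_le (le_trans (le_max_right _ _) h1))
      exact Set.mem_iInter₂.mp hx2 i hi
    rwa [h2] at this
end
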